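/- arXiv:1105.1223 — 2 statements merged into one kernel-verified Lean document; each statement's English description precedes it below -/
import Mathlib

section
/- For every X ∈ M₂(ℚ) with tr(X) = 0 and det(X) > 0, the stabilizer {g ∈ SL₂(ℤ) : gXg⁻¹ = X} of X in SL₂(ℤ) under the conjugation action is a finite group. -/
open Matrix

/-!
An element `g` of `SL₂(ℤ)` fixing `X` commutes with it, and `X` is not scalar, so `g = a + bX`
with `a, b ∈ ℚ`. As `X² = -det X`, we get `1 = det g = a² + b² det X`, a positive definite form
in `(a, b)`; hence `a`, `b` and so all entries of `g` are bounded, leaving finitely many `g`.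
-/

theorem Int.finite_setOf_sq_le {R : Type*} [Ring R] [LinearOrder R] [IsStrictOrderedRing R]
    [Archimedean R] (C : R) : {n : ℤ | (n : R) ^ 2 ≤ C}.Finite := by
  obtain ⟨N, hN⟩ := exists_nat_ge C
  refine (Set.finite_Icc (-(N : ℤ)) N).subset fun n hn => ?_
  have hsq : n ^ 2 ≤ N := by exact_mod_cast (Set.mem_ofPred.mp hn).trans hN
  have habs := Int.natAbs_le_self_sq n
  constructor <;> omega

namespace Matrix

theorem SpecialLinearGroup.finite_setOf_forall_apply_mem {n R : Type*} [Fintype n]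
    [DecidableEq n] [CommRing R] {S : n → n → Set R} (hS : ∀ i j, (S i j).Finite) :
    {g : SpecialLinearGroup n R | ∀ i j, g i j ∈ S i j}.Finite :=
  (Set.Finite.pi' fun i => Set.Finite.pi' (hS i)).preimage Subtype.val_injective.injOn

theorem SpecialLinearGroup.commute_of_mul_mul_inv_eq {n R : Type*} [Fintype n] [DecidableEq n]
    [CommRing R] (g : SpecialLinearGroup n R) {A : Matrix n n R}
    (h : (g : Matrix n n R) * A * (g⁻¹ : SpecialLinearGroup n R) = A) :
    Commute (g : Matrix n n R) A :=
  calc (g : Matrix n n R) * A = g * A * (g⁻¹ : SpecialLinearGroup n R) * g := by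
        rw [mul_assoc _ _ (g : Matrix n n R), ← SpecialLinearGroup.coe_mul, inv_mul_cancel,
          SpecialLinearGroup.coe_one, mul_one]
    _ = A * g := by rw [h]

theorem exists_eq_smul_one_add_smul_of_commute {K : Type*} [Field K]
    {M X : Matrix (Fin 2) (Fin 2) K} (hX : X 0 1 ≠ 0) (h : Commute M X) :
    ∃ a b : K, M = a • 1 + b • X := by
  have h00 := congrFun (congrFun h 0) 0
  have h01 := congrFun (congrFun h 0) 1
  simp only [mul_apply, Fin.sum_univ_two] at h00 h01
  obtain ⟨b, hM01⟩ : ∃ b, M 0 1 = b * X 0 1 := ⟨M 0 1 / X 0 1, (div_mul_cancel₀ _ hX).symm⟩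
  have hM10 : M 1 0 = b * X 1 0 :=
    mul_left_cancel₀ hX (by linear_combination -h00 + X 1 0 * hM01)
  have hM11 : M 1 1 = M 0 0 - b * X 0 0 + b * X 1 1 :=
    mul_left_cancel₀ hX (by linear_combination -h01 + (X 1 1 - X 0 0) * hM01)
  refine ⟨M 0 0 - b * X 0 0, b, ?_⟩
  ext i j
  fin_cases i <;> fin_cases j <;> simp [hM01, hM10, hM11]

theorem det_smul_one_add_smul_of_trace_eq_zero {R : Type*} [CommRing R]
    {X : Matrix (Fin 2) (Fin 2) R} (htr : trace X = 0) (a b : R) :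
    det (a • 1 + b • X) = a ^ 2 + b ^ 2 * det X := by
  rw [trace_fin_two] at htr
  simp only [det_fin_two, add_apply, smul_apply, smul_eq_mul, one_apply_eq, one_apply_ne, ne_eq,
    zero_ne_one, one_ne_zero, not_false_eq_true, mul_one, mul_zero, zero_add]
  linear_combination (a * b) * htr

theorem apply_zero_one_ne_zero_of_trace_eq_zero_of_det_pos {R : Type*} [CommRing R]
    [LinearOrder R] [IsStrictOrderedRing R] {X : Matrix (Fin 2) (Fin 2) R}
    (htr : trace X = 0) (hdet : 0 < det X) : X 0 1 ≠ 0 := by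
  intro h
  rw [trace_fin_two] at htr
  rw [det_fin_two, h, zero_mul, sub_zero, eq_neg_of_add_eq_zero_right htr] at hdet
  nlinarith [sq_nonneg (X 0 0)]

theorem sq_apply_smul_one_add_smul_le {K : Type*} [Field K] [LinearOrder K]
    [IsStrictOrderedRing K] {n : Type*} [DecidableEq n] (X : Matrix n n K) {a b d : K}
    (hd : 0 < d) (hab : a ^ 2 + b ^ 2 * d = 1) (i j : n) :
    ((a • 1 + b • X) i j) ^ 2 ≤ 2 * (1 + X i j ^ 2 / d) := by
  have ha : (if i = j then a else 0) ^ 2 ≤ 1 := by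
    split_ifs <;> nlinarith [sq_nonneg b]
  have hb : (b * X i j) ^ 2 ≤ X i j ^ 2 / d := by
    rw [le_div_iff₀ hd]
    nlinarith [sq_nonneg a, sq_nonneg (X i j)]
  calc ((a • 1 + b • X) i j) ^ 2 = ((if i = j then a else 0) + b * X i j) ^ 2 := by
        simp [one_apply]
    _ ≤ 2 * ((if i = j then a else 0) ^ 2 + (b * X i j) ^ 2) := add_sq_le
    _ ≤ 2 * (1 + X i j ^ 2 / d) := by linarith

theorem sq_apply_le_of_commute {K : Type*} [Field K] [LinearOrder K] [IsStrictOrderedRing K]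
    {M X : Matrix (Fin 2) (Fin 2) K} (htr : trace X = 0) (hdet : 0 < det X) (hM : det M = 1)
    (h : Commute M X) (i j : Fin 2) : M i j ^ 2 ≤ 2 * (1 + X i j ^ 2 / det X) := by
  obtain ⟨a, b, rfl⟩ := exists_eq_smul_one_add_smul_of_commute
    (apply_zero_one_ne_zero_of_trace_eq_zero_of_det_pos htr hdet) h
  rw [det_smul_one_add_smul_of_trace_eq_zero htr] at hM
  exact sq_apply_smul_one_add_smul_le X hdet hM i j

end Matrix

/-- For every trace-zero `2×2` rational matrix `X` with `det X > 0`,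
the stabilizer of `X` in `SL₂(ℤ)` under the conjugation action is finite. -/
theorem stabilizer_of_positive_norm_vector_finite
    (X : Matrix (Fin 2) (Fin 2) ℚ) (htr : Matrix.trace X = 0)
    (hdet : 0 < Matrix.det X) :
    Set.Finite {g : Matrix.SpecialLinearGroup (Fin 2) ℤ |
      (g : Matrix (Fin 2) (Fin 2) ℤ).map (Int.cast : ℤ → ℚ) * X
          * ((g⁻¹ : Matrix.SpecialLinearGroup (Fin 2) ℤ) :
              Matrix (Fin 2) (Fin 2) ℤ).map (Int.cast : ℤ → ℚ) = X} := by
  refine (SpecialLinearGroup.finite_setOf_forall_apply_mem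
    fun i j => Int.finite_setOf_sq_le (2 * (1 + X i j ^ 2 / X.det))).subset ?_
  intro g hg i j
  set gℚ := SpecialLinearGroup.map (Int.castRingHom ℚ) g
  have hcomm : Commute (gℚ : Matrix (Fin 2) (Fin 2) ℚ) X :=
    gℚ.commute_of_mul_mul_inv_eq (by rw [← map_inv]; exact hg)
  simpa [gℚ] using sq_apply_le_of_commute htr hdet gℚ.prop hcomm i j
end

section
/- For every τ in the complex upper half plane ℍ, the theta value Θ(τ) = 1 + 2·∑_{n=1}^{∞} e^{2πin²τ} = ∑_{n∈ℤ} e^{2πin²τ} is nonzero; that is, Θ is nowhere-vanishing on ℍ. -/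
/-!
Writing `θ₃, θ₄, θ₂` for the theta constants, `Θ(τ) = θ₃(2τ)`. The maps `τ ↦ τ + 1` and
`τ ↦ -1/τ` permute `θ₃, θ₄, θ₂` up to nowhere vanishing factors (the latter by the functional
equation of `jacobiTheta₂`), so the zero set of `θ₃ θ₄ θ₂` is invariant under `SL(2, ℤ)`. Every
orbit meets the fundamental domain, where `Im τ ≥ √3/2`; there each theta constant is
dominated by its leading terms and hence does not vanish.
-/

open Complex Real
open ModularGroup
open scoped UpperHalfPlane MatrixGroups

lemma ModularGroup.smul_mem_iff_of_S_T {P : Set ℍ} (hS : ∀ τ, S • τ ∈ P ↔ τ ∈ P)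
    (hT : ∀ τ, T • τ ∈ P ↔ τ ∈ P) (g : SL(2, ℤ)) (τ : ℍ) : g • τ ∈ P ↔ τ ∈ P := by
  have hg : g ∈ Subgroup.closure {S, T} := by simp [SpecialLinearGroup.SL2Z_generators]
  induction hg using Subgroup.closure_induction generalizing τ with
  | mem g hg =>
    rcases hg with rfl | rfl
    exacts [hS τ, hT τ]
  | one => rw [one_smul]
  | mul g h _ _ hg hh => rw [mul_smul]; exact (hg _).trans (hh τ)
  | inv g _ hg => simpa using (hg (g⁻¹ • τ)).symm

lemma jacobiTheta₂_add_one_right (z τ : ℂ) :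
    jacobiTheta₂ z (τ + 1) = jacobiTheta₂ (z + 1 / 2) τ := by
  refine tsum_congr fun n ↦ exp_eq_exp_iff_exists_int.mpr ?_
  obtain ⟨k, hk⟩ := Int.even_mul_pred_self n
  refine ⟨k, ?_⟩
  have hk' : (n : ℂ) * (n - 1) = k + k := by exact_mod_cast hk
  linear_combination (π * I) * hk'

lemma jacobiTheta₂_div_neg_one_div_eq_zero_iff {τ : ℂ} (hτ : τ ≠ 0) (z : ℂ) :
    jacobiTheta₂ (z / τ) (-1 / τ) = 0 ↔ jacobiTheta₂ z τ = 0 := by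
  have hfactor : 1 / (-I * τ) ^ (1 / 2 : ℂ) * cexp (-π * I * z ^ 2 / τ) ≠ 0 := by
    refine mul_ne_zero (one_div_ne_zero ?_) (exp_ne_zero _)
    rw [Ne, cpow_eq_zero_iff, not_and_or]
    exact .inl (mul_ne_zero (neg_ne_zero.mpr I_ne_zero) hτ)
  rw [jacobiTheta₂_functional_equation z τ, mul_eq_zero, or_iff_right hfactor]

/-- The factors are `θ₃ τ`, `θ₄ τ` and `exp (-π i τ / 4) θ₂ τ`. -/
noncomputable def jacobiThetaNullProduct (τ : ℂ) : ℂ :=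
  jacobiTheta₂ 0 τ * jacobiTheta₂ (1 / 2) τ * jacobiTheta₂ (τ / 2) τ

lemma jacobiThetaNullProduct_add_one (τ : ℂ) :
    jacobiThetaNullProduct (τ + 1) = jacobiThetaNullProduct τ := by
  simp only [jacobiThetaNullProduct, jacobiTheta₂_add_one_right]
  rw [zero_add, add_halves, show (τ + 1) / 2 + 1 / 2 = τ / 2 + 1 by ring,
    jacobiTheta₂_add_left, ← zero_add 1, jacobiTheta₂_add_left]
  ring

lemma jacobiThetaNullProduct_neg_one_div_eq_zero_iff {τ : ℂ} (hτ : τ ≠ 0) :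
    jacobiThetaNullProduct (-1 / τ) = 0 ↔ jacobiThetaNullProduct τ = 0 := by
  have h₀ := jacobiTheta₂_div_neg_one_div_eq_zero_iff hτ 0
  have h₁ := jacobiTheta₂_div_neg_one_div_eq_zero_iff hτ (1 / 2)
  have h₂ := jacobiTheta₂_div_neg_one_div_eq_zero_iff hτ (τ / 2)
  rw [zero_div] at h₀
  rw [← jacobiTheta₂_neg_left, show -(1 / 2 / τ) = -1 / τ / 2 by ring] at h₁
  rw [show τ / 2 / τ = 1 / 2 by field_simp] at h₂
  simp only [jacobiThetaNullProduct, mul_eq_zero, h₀, h₁, h₂]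
  tauto

lemma jacobiThetaNullProduct_smul_eq_zero_iff (g : SL(2, ℤ)) (τ : ℍ) :
    jacobiThetaNullProduct (g • τ : ℍ) = 0 ↔ jacobiThetaNullProduct τ = 0 := by
  refine smul_mem_iff_of_S_T (P := {τ : ℍ | jacobiThetaNullProduct τ = 0}) (fun τ ↦ ?_)
    (fun τ ↦ ?_) g τ
  · rw [Set.mem_ofPred_eq, UpperHalfPlane.modular_S_smul, UpperHalfPlane.coe_mk,
      inv_neg, ← one_div, ← neg_div]
    exact jacobiThetaNullProduct_neg_one_div_eq_zero_iff τ.ne_zero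
  · rw [Set.mem_ofPred_eq, UpperHalfPlane.modular_T_smul, UpperHalfPlane.coe_vadd, ofReal_one,
      add_comm, jacobiThetaNullProduct_add_one]
    rfl

lemma jacobiTheta_ne_zero_of_exp_lt {τ : ℂ} (hτ : rexp (-π * τ.im) < 1 / 3) :
    jacobiTheta τ ≠ 0 := by
  have him : 0 < τ.im := by nlinarith [pi_pos, exp_lt_one_iff.mp (hτ.trans (by norm_num))]
  have hbound : ‖jacobiTheta τ - 1‖ < 1 := by
    refine (norm_jacobiTheta_sub_one_le him).trans_lt ?_
    rw [div_mul_eq_mul_div, div_lt_one (by linarith)]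
    linarith
  intro h
  simp [h] at hbound

lemma hasSum_nat_jacobiTheta₂_half_self {τ : ℂ} (hτ : 0 < τ.im) :
    HasSum (fun n : ℕ ↦ 2 * cexp (π * I * (n * (n + 1)) * τ)) (jacobiTheta₂ (τ / 2) τ) := by
  refine (hasSum_jacobiTheta₂_term _ hτ).nat_add_neg_add_one.congr_fun fun n ↦ ?_
  simp only [jacobiTheta₂_term]
  push_cast
  ring_nf

lemma norm_jacobiTheta₂_half_self_sub_two_le {τ : ℂ} (hτ : 0 < τ.im) :
    ‖jacobiTheta₂ (τ / 2) τ - 2‖ ≤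
      2 / (1 - rexp (-2 * π * τ.im)) * rexp (-2 * π * τ.im) := by
  set ρ := rexp (-2 * π * τ.im)
  have hρ : ρ < 1 := exp_lt_one_iff.mpr (by nlinarith [pi_pos])
  have htail := (hasSum_nat_add_iff' 1).mpr (hasSum_nat_jacobiTheta₂_half_self hτ)
  simp only [Nat.cast_add, Nat.cast_one, Finset.range_one, Finset.sum_singleton,
    CharP.cast_eq_zero, zero_add, mul_one, mul_zero, zero_mul, Complex.exp_zero] at htail
  have hgeom : HasSum (fun n : ℕ ↦ 2 * ρ ^ (n + 1)) (2 / (1 - ρ) * ρ) := by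
    rw [div_mul_eq_mul_div, div_eq_mul_inv]
    simpa only [pow_succ', mul_assoc] using
      (hasSum_geometric_of_lt_one (r := ρ) (by positivity) hρ).mul_left (2 * ρ)
  refine htail.norm_le_of_bounded hgeom fun n ↦ ?_
  have hre : (π * I * ((n + 1) * (n + 1 + 1)) * τ).re = -π * ((n + 1) * (n + 2)) * τ.im := by
    simp only [mul_re, mul_im, I_re, I_im, ofReal_re, ofReal_im, add_re, add_im, natCast_re,
      natCast_im, one_re, one_im]
    ring
  rw [norm_mul, Complex.norm_two, Complex.norm_exp, hre, ← Real.exp_nat_mul]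
  gcongr 2 * rexp ?_
  push_cast
  nlinarith [mul_nonneg (mul_nonneg pi_pos.le hτ.le) (by positivity : (0 : ℝ) ≤ n * (n + 1))]

lemma jacobiTheta₂_half_self_ne_zero {τ : ℂ} (hτ : rexp (-2 * π * τ.im) < 1 / 2) :
    jacobiTheta₂ (τ / 2) τ ≠ 0 := by
  have him : 0 < τ.im := by nlinarith [pi_pos, exp_lt_one_iff.mp (hτ.trans (by norm_num))]
  have hbound : ‖jacobiTheta₂ (τ / 2) τ - 2‖ < 2 := by
    refine (norm_jacobiTheta₂_half_self_sub_two_le him).trans_lt ?_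
    rw [div_mul_eq_mul_div, div_lt_iff₀ (by linarith)]
    linarith
  intro h
  simp [h] at hbound

lemma jacobiThetaNullProduct_ne_zero {τ : ℂ} (hτ : rexp (-π * τ.im) < 1 / 3) :
    jacobiThetaNullProduct τ ≠ 0 := by
  have h₀ : jacobiTheta₂ 0 τ ≠ 0 := by
    rw [← jacobiTheta_eq_jacobiTheta₂]
    exact jacobiTheta_ne_zero_of_exp_lt hτ
  have h₁ : jacobiTheta₂ (1 / 2) τ ≠ 0 := by
    rw [← zero_add (1 / 2), ← jacobiTheta₂_add_one_right, ← jacobiTheta_eq_jacobiTheta₂]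
    exact jacobiTheta_ne_zero_of_exp_lt (by simpa using hτ)
  have h₂ : jacobiTheta₂ (τ / 2) τ ≠ 0 := by
    refine jacobiTheta₂_half_self_ne_zero ?_
    have hsq : rexp (-2 * π * τ.im) = rexp (-π * τ.im) ^ 2 := by
      rw [sq, ← Real.exp_add]
      ring_nf
    rw [hsq]
    nlinarith [exp_pos (-π * τ.im)]
  exact mul_ne_zero (mul_ne_zero h₀ h₁) h₂

lemma exp_neg_pi_mul_im_lt_of_mem_fd {τ : ℍ} (hτ : τ ∈ fd) : rexp (-π * τ.im) < 1 / 3 := by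
  have him : 4 / 5 < τ.im := by nlinarith [three_le_four_mul_im_sq_of_mem_fd hτ, τ.im_pos]
  have h3 : 3 < rexp (π * τ.im) := by
    nlinarith [add_one_le_exp (π * τ.im), pi_gt_three]
  rw [neg_mul, Real.exp_neg, inv_lt_comm₀ (exp_pos _) (by norm_num)]
  linarith

/-- The Jacobi theta value
`Θ(τ) = ∑_{n ∈ ℤ} e^{2πin²τ}  (= 1 + 2∑_{n ≥ 1} q^{n²})` is nonzero for every `τ` in
the upper half plane. -/
theorem theta_nowhere_vanishing (τ : ℂ) (hτ : 0 < τ.im) :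
    (∑' n : ℤ, Complex.exp (2 * Real.pi * Complex.I * (n : ℂ) ^ 2 * τ)) ≠ 0 := by
  let w : ℍ := ⟨2 * τ, by simpa using hτ⟩
  have hsum : ∑' n : ℤ, cexp (2 * π * I * (n : ℂ) ^ 2 * τ) = jacobiTheta₂ 0 (2 * τ) := by
    rw [← jacobiTheta_eq_jacobiTheta₂, jacobiTheta]
    exact tsum_congr fun n ↦ by ring_nf
  obtain ⟨g, hg⟩ := exists_smul_mem_fd w
  have hw : jacobiThetaNullProduct w ≠ 0 := by
    rw [Ne, ← jacobiThetaNullProduct_smul_eq_zero_iff g]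
    exact jacobiThetaNullProduct_ne_zero (exp_neg_pi_mul_im_lt_of_mem_fd hg)
  rw [hsum]
  exact left_ne_zero_of_mul (left_ne_zero_of_mul hw)
end
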